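/- Let K be a field and let (V, c) be a braided vector space over K such that c is of Hecke type of mark λ with (2)_λ ≠ 0 and (3)_λ ≠ 0. Let R := Im(λ·id_{V⊗V} − c) ⊆ V ⊗ V and let ζ := (λ·id − c₁) ∘ (λ²·id − λ·c₂ + c₂ ∘ c₁) : V ⊗ V ⊗ V → V ⊗ V ⊗ V. Then the image of R ⊗ V in V⊗V⊗V intersected with the image of V ⊗ R equals { x ∈ V ⊗ V ⊗ V : c₁(x) = −x and c₂(x) = −x }, and this subspace equals Im(ζ). -/
import Mathlib


open TensorProduct

noncomputable section

variable {K : Type*} [Field K] {V : Type*} [AddCommGroup V] [Module K V]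

/-- The endomorphism `c ⊗ id_V` of `V ⊗ (V ⊗ V)` (transported along associativity). -/
def opC1 (c : V ⊗[K] V →ₗ[K] V ⊗[K] V) :
    V ⊗[K] (V ⊗[K] V) →ₗ[K] V ⊗[K] (V ⊗[K] V) :=
  (TensorProduct.assoc K V V V).toLinearMap ∘ₗ
    LinearMap.rTensor V c ∘ₗ (TensorProduct.assoc K V V V).symm.toLinearMap

/-- The endomorphism `id_V ⊗ c` of `V ⊗ (V ⊗ V)`. -/
def opC2 (c : V ⊗[K] V →ₗ[K] V ⊗[K] V) :
    V ⊗[K] (V ⊗[K] V) →ₗ[K] V ⊗[K] (V ⊗[K] V) :=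
  LinearMap.lTensor V c

/-- The map `b ⊗ id_V : V ⊗ (V ⊗ V) → V ⊗ V`. -/
def opB1 (b : V ⊗[K] V →ₗ[K] V) :
    V ⊗[K] (V ⊗[K] V) →ₗ[K] V ⊗[K] V :=
  LinearMap.rTensor V b ∘ₗ (TensorProduct.assoc K V V V).symm.toLinearMap

/-- The map `id_V ⊗ b : V ⊗ (V ⊗ V) → V ⊗ V`. -/
def opB2 (b : V ⊗[K] V →ₗ[K] V) :
    V ⊗[K] (V ⊗[K] V) →ₗ[K] V ⊗[K] V :=
  LinearMap.lTensor V b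

/-- The braid equation `c₁ ∘ c₂ ∘ c₁ = c₂ ∘ c₁ ∘ c₂`. -/
def BraidEq (c : V ⊗[K] V →ₗ[K] V ⊗[K] V) : Prop :=
  opC1 c ∘ₗ opC2 c ∘ₗ opC1 c = opC2 c ∘ₗ opC1 c ∘ₗ opC2 c

/-- `c` is of Hecke type of mark `lam`: `(c + id) ∘ (c - lam • id) = 0`. -/
def IsHecke (lam : K) (c : V ⊗[K] V →ₗ[K] V ⊗[K] V) : Prop :=
  (c + LinearMap.id) ∘ₗ (c - lam • LinearMap.id) = 0

/-- `b` is a `c`-bracket: `c ∘ b₁ = b₂ ∘ c₁ ∘ c₂` and `c ∘ b₂ = b₁ ∘ c₂ ∘ c₁`. -/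
def IsBracket (c : V ⊗[K] V →ₗ[K] V ⊗[K] V) (b : V ⊗[K] V →ₗ[K] V) : Prop :=
  c ∘ₗ opB1 b = opB2 b ∘ₗ opC1 c ∘ₗ opC2 c ∧
  c ∘ₗ opB2 b = opB1 b ∘ₗ opC2 c ∘ₗ opC1 c

/-- The linear map `V ⊗ V → T(V)`, `v ⊗ w ↦ ι v * ι w`. -/
def tensMul : V ⊗[K] V →ₗ[K] TensorAlgebra K V :=
  LinearMap.mul' K (TensorAlgebra K V) ∘ₗ
    TensorProduct.map (TensorAlgebra.ι K) (TensorAlgebra.ι K)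

/-- The relation on `T(V)` whose associated ring quotient is
`U(V,c,b) = T(V)/(c(z) - lam•z - b(z) : z ∈ V ⊗ V)`. -/
def envRel (lam : K) (c : V ⊗[K] V →ₗ[K] V ⊗[K] V) (b : V ⊗[K] V →ₗ[K] V) :
    TensorAlgebra K V → TensorAlgebra K V → Prop :=
  fun x y => ∃ z : V ⊗[K] V,
    x = tensMul (c z) ∧ y = lam • tensMul z + TensorAlgebra.ι K (b z)

/-- The canonical map `ι_{c,b} : V → U(V,c,b)`. -/
def envIota (lam : K) (c : V ⊗[K] V →ₗ[K] V ⊗[K] V) (b : V ⊗[K] V →ₗ[K] V) :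
    V →ₗ[K] RingQuot (envRel lam c b) :=
  (RingQuot.mkAlgHom K (envRel lam c b)).toLinearMap ∘ₗ TensorAlgebra.ι K

/-- The q-integer `(n)_lam = 1 + lam + ⋯ + lam^(n-1)`. -/
def qInt (lam : K) (n : ℕ) : K := ∑ i ∈ Finset.range n, lam ^ i

/-- The q-factorial `(n)!_lam = (1)_lam (2)_lam ⋯ (n)_lam`. -/
def qFac (lam : K) (n : ℕ) : K := ∏ i ∈ Finset.range n, qInt lam (i + 1)



section AuxLemmas

variable {K : Type*} [Field K] {V : Type*} [AddCommGroup V] [Module K V]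

lemma opC1_comp' (f g : V ⊗[K] V →ₗ[K] V ⊗[K] V) :
    opC1 (f ∘ₗ g) = opC1 f ∘ₗ opC1 g := by
  simp only [opC1, LinearMap.rTensor_comp]; ext x; simp

lemma opC1_id' : opC1 (LinearMap.id : V ⊗[K] V →ₗ[K] V ⊗[K] V) = LinearMap.id := by
  simp only [opC1, LinearMap.rTensor_id]; ext x; simp

lemma opC1_add' (f g : V ⊗[K] V →ₗ[K] V ⊗[K] V) : opC1 (f + g) = opC1 f + opC1 g := by
  simp only [opC1, LinearMap.rTensor_add]; ext x; simp

lemma opC1_smul' (l : K) (f : V ⊗[K] V →ₗ[K] V ⊗[K] V) : opC1 (l • f) = l • opC1 f := by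
  simp only [opC1, LinearMap.rTensor_smul]; ext x; simp

lemma opC1_sub' (f g : V ⊗[K] V →ₗ[K] V ⊗[K] V) : opC1 (f - g) = opC1 f - opC1 g := by
  simp only [opC1, LinearMap.rTensor_sub]; ext x; simp

lemma opC1_zero' : opC1 (0 : V ⊗[K] V →ₗ[K] V ⊗[K] V) = 0 := by
  simp only [opC1]; ext x; simp

lemma opC2_comp' (f g : V ⊗[K] V →ₗ[K] V ⊗[K] V) :
    opC2 (f ∘ₗ g) = opC2 f ∘ₗ opC2 g := by
  simp only [opC2, LinearMap.lTensor_comp]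

lemma opC2_id' : opC2 (LinearMap.id : V ⊗[K] V →ₗ[K] V ⊗[K] V) = LinearMap.id := by
  simp only [opC2, LinearMap.lTensor_id]

lemma opC2_add' (f g : V ⊗[K] V →ₗ[K] V ⊗[K] V) : opC2 (f + g) = opC2 f + opC2 g := by
  simp only [opC2, LinearMap.lTensor_add]

lemma opC2_smul' (l : K) (f : V ⊗[K] V →ₗ[K] V ⊗[K] V) : opC2 (l • f) = l • opC2 f := by
  simp only [opC2, LinearMap.lTensor_smul]

lemma opC2_sub' (f g : V ⊗[K] V →ₗ[K] V ⊗[K] V) : opC2 (f - g) = opC2 f - opC2 g := by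
  simp only [opC2, LinearMap.lTensor_sub]

lemma opC2_zero' : opC2 (0 : V ⊗[K] V →ₗ[K] V ⊗[K] V) = 0 := by
  simp only [opC2]; ext x; simp

lemma qInt_two (lam : K) : qInt lam 2 = 1 + lam := by
  simp [qInt, Finset.sum_range_succ]

lemma qInt_three (lam : K) : qInt lam 3 = 1 + lam + lam ^ 2 := by
  simp [qInt, Finset.sum_range_succ]

/-- Key noncommutative identity. -/
lemma key_b_aux {A : Type*} [Ring A] [Algebra K A] (lam : K) (a b : A)
    (hb : b * b = lam • b - b + lam • (1 : A))
    (hbr : a * (b * a) = b * (a * b)) :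
    (b + 1) * ((lam • (1 : A) - a) * ((lam ^ 2) • (1 : A) - lam • b + b * a)) = 0 := by
  have h1 : b * (b * a) = lam • (b * a) - b * a + lam • a := by
    rw [← mul_assoc, hb]
    simp [sub_mul, add_mul, smul_mul_assoc]
  have h2 : b * (a * (b * a)) = lam • (a * (b * a)) - a * (b * a) + lam • (a * b) := by
    rw [hbr, ← mul_assoc, hb]
    simp [sub_mul, add_mul, smul_mul_assoc, ← hbr]
  simp only [mul_add, add_mul, mul_sub, sub_mul, mul_one, one_mul, smul_mul_assoc,
    mul_smul_comm, mul_assoc, h1, h2, hb, ← hbr]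
  module

lemma key_a_aux {A : Type*} [Ring A] [Algebra K A] (lam : K) (a : A) (X : A)
    (ha : (a + 1) * (a - lam • (1 : A)) = 0) :
    (a + 1) * ((lam • (1 : A) - a) * X) = 0 := by
  have h : (a + 1) * (lam • (1 : A) - a) = 0 := by
    rw [← neg_sub a (lam • (1 : A)), mul_neg, ha, neg_zero]
  rw [← mul_assoc, h, zero_mul]

lemma sq_of_hecke {M : Type*} [AddCommGroup M] [Module K M] (lam : K) (b : Module.End K M)
    (h : (b + 1) * (b - lam • 1) = 0) :
    b * b = lam • b - b + lam • (1 : Module.End K M) := by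
  rw [← sub_eq_zero, ← h]
  simp only [add_mul, mul_sub, one_mul, mul_smul_comm, mul_one]
  module

end AuxLemmas

/-- **Lemma.**  Let `(V,c)` be a braided vector space of Hecke type of mark `lam` with
`(2)_lam ≠ 0` and `(3)_lam ≠ 0`, let `R := Im(lam•id - c)` and
`ζ := (lam•id - c₁) ∘ (lam²•id - lam•c₂ + c₂∘c₁)`.  Then (the image of) `R ⊗ V`
intersected with (the image of) `V ⊗ R` in `V ⊗ V ⊗ V` equals
`{x : c₁ x = -x and c₂ x = -x}`, and this subspace equals `Im ζ`. -/
theorem inter_RV_VR_eq_ker_eq_range_zeta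
    (lam : K) (h2 : qInt lam 2 ≠ 0) (h3 : qInt lam 3 ≠ 0)
    (c : V ⊗[K] V →ₗ[K] V ⊗[K] V) (hbraid : BraidEq c) (hHecke : IsHecke lam c) :
    (Submodule.span K {x : V ⊗[K] (V ⊗[K] V) |
        ∃ r ∈ LinearMap.range (lam • (LinearMap.id : V ⊗[K] V →ₗ[K] V ⊗[K] V) - c),
          ∃ v : V, x = (TensorProduct.assoc K V V V) (r ⊗ₜ[K] v)} ⊓
      Submodule.span K {x : V ⊗[K] (V ⊗[K] V) |
        ∃ v : V,
          ∃ r ∈ LinearMap.range (lam • (LinearMap.id : V ⊗[K] V →ₗ[K] V ⊗[K] V) - c),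
            x = v ⊗ₜ[K] r} =
      LinearMap.ker (opC1 c + LinearMap.id) ⊓ LinearMap.ker (opC2 c + LinearMap.id)) ∧
    (Submodule.span K {x : V ⊗[K] (V ⊗[K] V) |
        ∃ r ∈ LinearMap.range (lam • (LinearMap.id : V ⊗[K] V →ₗ[K] V ⊗[K] V) - c),
          ∃ v : V, x = (TensorProduct.assoc K V V V) (r ⊗ₜ[K] v)} ⊓
      Submodule.span K {x : V ⊗[K] (V ⊗[K] V) |
        ∃ v : V,
          ∃ r ∈ LinearMap.range (lam • (LinearMap.id : V ⊗[K] V →ₗ[K] V ⊗[K] V) - c),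
            x = v ⊗ₜ[K] r} =
      LinearMap.range ((lam • LinearMap.id - opC1 c) ∘ₗ
        (lam ^ 2 • LinearMap.id - lam • opC2 c + opC2 c ∘ₗ opC1 c))) := by
  classical
  have hH : (c + LinearMap.id) ∘ₗ (c - lam • LinearMap.id) = (0 : V ⊗[K] V →ₗ[K] V ⊗[K] V) :=
    hHecke
  have hbr : opC1 c ∘ₗ opC2 c ∘ₗ opC1 c = opC2 c ∘ₗ opC1 c ∘ₗ opC2 c := hbraid
  set a := opC1 c with ha_def
  set b := opC2 c with hb_def
  have hcR : ∀ r ∈ LinearMap.range (lam • (LinearMap.id : V ⊗[K] V →ₗ[K] V ⊗[K] V) - c),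
      c r = -r := by
    rintro r ⟨y, rfl⟩
    have h0 := LinearMap.congr_fun hH y
    simp only [LinearMap.comp_apply, LinearMap.add_apply, LinearMap.sub_apply,
      LinearMap.smul_apply, LinearMap.id_apply, LinearMap.zero_apply] at h0
    have h1 : c (c y - lam • y) = -(c y - lam • y) := eq_neg_of_add_eq_zero_left h0
    simp only [LinearMap.sub_apply, LinearMap.smul_apply, LinearMap.id_apply]
    rw [show lam • y - c y = -(c y - lam • y) from (neg_sub _ _).symm, map_neg, h1, neg_neg]
  have h2' : (1 : K) + lam ≠ 0 := by rwa [qInt_two] at h2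
  -- Hecke in the endomorphism ring for a and b
  have hAH : (a + LinearMap.id) ∘ₗ (a - lam • LinearMap.id) =
      (0 : V ⊗[K] (V ⊗[K] V) →ₗ[K] V ⊗[K] (V ⊗[K] V)) := by
    rw [ha_def, ← opC1_id' (K := K) (V := V), ← opC1_smul', ← opC1_add', ← opC1_sub',
      ← opC1_comp', hH, opC1_zero']
  have hBH : (b + LinearMap.id) ∘ₗ (b - lam • LinearMap.id) =
      (0 : V ⊗[K] (V ⊗[K] V) →ₗ[K] V ⊗[K] (V ⊗[K] V)) := by
    rw [hb_def, ← opC2_id' (K := K) (V := V), ← opC2_smul', ← opC2_add', ← opC2_sub',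
      ← opC2_comp', hH, opC2_zero']
  -- span of R ⊗ V equals ker (a + 1)
  have hS1 : Submodule.span K {x : V ⊗[K] (V ⊗[K] V) |
        ∃ r ∈ LinearMap.range (lam • (LinearMap.id : V ⊗[K] V →ₗ[K] V ⊗[K] V) - c),
          ∃ v : V, x = (TensorProduct.assoc K V V V) (r ⊗ₜ[K] v)} =
      LinearMap.ker (a + LinearMap.id) := by
    apply le_antisymm
    · rw [Submodule.span_le]
      rintro x ⟨r, hr, v, rfl⟩
      have hcr := hcR r hr
      simp only [SetLike.mem_coe, LinearMap.mem_ker, LinearMap.add_apply, LinearMap.id_apply]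
      have e1 : a ((TensorProduct.assoc K V V V) (r ⊗ₜ[K] v)) =
          (TensorProduct.assoc K V V V) ((c r) ⊗ₜ[K] v) := by
        simp [ha_def, opC1]
      rw [e1, hcr, ← map_add, ← add_tmul, neg_add_cancel, zero_tmul, map_zero]
    · intro x hx
      have hx' : a x = -x := by
        rw [LinearMap.mem_ker, LinearMap.add_apply, LinearMap.id_apply,
          add_eq_zero_iff_eq_neg] at hx
        exact hx
      have claim : ∀ y : (V ⊗[K] V) ⊗[K] V,
          (TensorProduct.assoc K V V V)
            (LinearMap.rTensor V (lam • (LinearMap.id : V ⊗[K] V →ₗ[K] V ⊗[K] V) - c) y) ∈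
          Submodule.span K {x : V ⊗[K] (V ⊗[K] V) |
            ∃ r ∈ LinearMap.range (lam • (LinearMap.id : V ⊗[K] V →ₗ[K] V ⊗[K] V) - c),
              ∃ v : V, x = (TensorProduct.assoc K V V V) (r ⊗ₜ[K] v)} := by
        intro y
        induction y using TensorProduct.induction_on with
        | zero => simp
        | tmul z w =>
          rw [LinearMap.rTensor_tmul]
          exact Submodule.subset_span ⟨_, ⟨z, rfl⟩, w, rfl⟩
        | add y₁ y₂ ih₁ ih₂ =>
          rw [map_add, map_add]
          exact add_mem ih₁ ih₂
      have key := claim ((TensorProduct.assoc K V V V).symm x)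
      have e : (TensorProduct.assoc K V V V)
          (LinearMap.rTensor V (lam • (LinearMap.id : V ⊗[K] V →ₗ[K] V ⊗[K] V) - c)
            ((TensorProduct.assoc K V V V).symm x)) = ((1 : K) + lam) • x := by
        have e0 : (TensorProduct.assoc K V V V)
            (LinearMap.rTensor V (lam • (LinearMap.id : V ⊗[K] V →ₗ[K] V ⊗[K] V) - c)
              ((TensorProduct.assoc K V V V).symm x)) =
            opC1 (lam • (LinearMap.id : V ⊗[K] V →ₗ[K] V ⊗[K] V) - c) x := rfl
        rw [e0, opC1_sub', opC1_smul', opC1_id', LinearMap.sub_apply, LinearMap.smul_apply,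
          LinearMap.id_apply, ← ha_def, hx']
        module
      rw [e] at key
      have ex : x = ((1 : K) + lam)⁻¹ • (((1 : K) + lam) • x) := by
        rw [smul_smul, inv_mul_cancel₀ h2', one_smul]
      rw [ex]
      exact Submodule.smul_mem _ _ key
  -- span of V ⊗ R equals ker (b + 1)
  have hS2 : Submodule.span K {x : V ⊗[K] (V ⊗[K] V) |
        ∃ v : V,
          ∃ r ∈ LinearMap.range (lam • (LinearMap.id : V ⊗[K] V →ₗ[K] V ⊗[K] V) - c),
            x = v ⊗ₜ[K] r} =
      LinearMap.ker (b + LinearMap.id) := by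
    apply le_antisymm
    · rw [Submodule.span_le]
      rintro x ⟨v, r, hr, rfl⟩
      have hcr := hcR r hr
      simp only [SetLike.mem_coe, LinearMap.mem_ker, LinearMap.add_apply, LinearMap.id_apply]
      have e1 : b (v ⊗ₜ[K] r) = v ⊗ₜ[K] (c r) := by
        simp [hb_def, opC2]
      rw [e1, hcr, ← tmul_add, neg_add_cancel, tmul_zero]
    · intro x hx
      have hx' : b x = -x := by
        rw [LinearMap.mem_ker, LinearMap.add_apply, LinearMap.id_apply,
          add_eq_zero_iff_eq_neg] at hx
        exact hx
      have claim : ∀ y : V ⊗[K] (V ⊗[K] V),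
          LinearMap.lTensor V (lam • (LinearMap.id : V ⊗[K] V →ₗ[K] V ⊗[K] V) - c) y ∈
          Submodule.span K {x : V ⊗[K] (V ⊗[K] V) |
            ∃ v : V,
              ∃ r ∈ LinearMap.range (lam • (LinearMap.id : V ⊗[K] V →ₗ[K] V ⊗[K] V) - c),
                x = v ⊗ₜ[K] r} := by
        intro y
        induction y using TensorProduct.induction_on with
        | zero => simp
        | tmul v z =>
          rw [LinearMap.lTensor_tmul]
          exact Submodule.subset_span ⟨v, _, ⟨z, rfl⟩, rfl⟩
        | add y₁ y₂ ih₁ ih₂ =>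
          rw [map_add]
          exact add_mem ih₁ ih₂
      have key := claim x
      have e : LinearMap.lTensor V (lam • (LinearMap.id : V ⊗[K] V →ₗ[K] V ⊗[K] V) - c) x =
          ((1 : K) + lam) • x := by
        have e0 : LinearMap.lTensor V (lam • (LinearMap.id : V ⊗[K] V →ₗ[K] V ⊗[K] V) - c) x =
            opC2 (lam • (LinearMap.id : V ⊗[K] V →ₗ[K] V ⊗[K] V) - c) x := rfl
        rw [e0, opC2_sub', opC2_smul', opC2_id', LinearMap.sub_apply, LinearMap.smul_apply,
          LinearMap.id_apply, ← hb_def, hx']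
        module
      rw [e] at key
      have ex : x = ((1 : K) + lam)⁻¹ • (((1 : K) + lam) • x) := by
        rw [smul_smul, inv_mul_cancel₀ h2', one_smul]
      rw [ex]
      exact Submodule.smul_mem _ _ key
  -- kernels intersection = range of zeta
  have hZ : LinearMap.ker (a + LinearMap.id) ⊓ LinearMap.ker (b + LinearMap.id) =
      LinearMap.range ((lam • LinearMap.id - a) ∘ₗ
        (lam ^ 2 • LinearMap.id - lam • b + b ∘ₗ a)) := by
    -- work in the endomorphism ring
    have hAH' : (a + 1) * (a - lam • (1 : Module.End K (V ⊗[K] (V ⊗[K] V)))) = 0 := hAH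
    have hBH' : (b + 1) * (b - lam • (1 : Module.End K (V ⊗[K] (V ⊗[K] V)))) = 0 := hBH
    have hbr' : a * (b * a) = b * (a * b) := hbr
    have hbb : b * b = lam • b - b + lam • (1 : Module.End K (V ⊗[K] (V ⊗[K] V))) :=
      sq_of_hecke lam b hBH' 
    have hzb : (b + 1) * ((lam • (1 : Module.End K (V ⊗[K] (V ⊗[K] V))) - a) *
        ((lam ^ 2) • (1 : Module.End K (V ⊗[K] (V ⊗[K] V))) - lam • b + b * a)) = 0 :=
      key_b_aux (A := Module.End K (V ⊗[K] (V ⊗[K] V))) lam a b hbb hbr'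
    have hza : (a + 1) * ((lam • (1 : Module.End K (V ⊗[K] (V ⊗[K] V))) - a) *
        ((lam ^ 2) • (1 : Module.End K (V ⊗[K] (V ⊗[K] V))) - lam • b + b * a)) = 0 :=
      key_a_aux (A := Module.End K (V ⊗[K] (V ⊗[K] V))) lam a _ hAH'
    apply le_antisymm
    · intro x hx
      rw [Submodule.mem_inf] at hx
      obtain ⟨hxa, hxb⟩ := hx
      have hxa' : a x = -x := by
        rw [LinearMap.mem_ker, LinearMap.add_apply, LinearMap.id_apply,
          add_eq_zero_iff_eq_neg] at hxa
        exact hxa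
      have hxb' : b x = -x := by
        rw [LinearMap.mem_ker, LinearMap.add_apply, LinearMap.id_apply,
          add_eq_zero_iff_eq_neg] at hxb
        exact hxb
      refine ⟨(qInt lam 2 * qInt lam 3)⁻¹ • x, ?_⟩
      rw [map_smul]
      have ev : ((lam • LinearMap.id - a) ∘ₗ
          (lam ^ 2 • LinearMap.id - lam • b + b ∘ₗ a)) x = (qInt lam 2 * qInt lam 3) • x := by
        have hinner : (lam ^ 2 • LinearMap.id - lam • b + b ∘ₗ a :
            V ⊗[K] (V ⊗[K] V) →ₗ[K] V ⊗[K] (V ⊗[K] V)) x = (qInt lam 3) • x := by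
          simp only [LinearMap.add_apply, LinearMap.sub_apply, LinearMap.smul_apply,
            LinearMap.id_apply, LinearMap.comp_apply, hxa', map_neg, hxb', neg_neg, qInt_three]
          module
        rw [LinearMap.comp_apply, hinner, map_smul, LinearMap.sub_apply, LinearMap.smul_apply,
          LinearMap.id_apply, hxa', qInt_two, qInt_three]
        match_scalars
        ring
      rw [ev, smul_smul, inv_mul_cancel₀ (mul_ne_zero h2 h3), one_smul]
    · rintro x ⟨y, rfl⟩
      rw [Submodule.mem_inf]
      constructor
      · rw [LinearMap.mem_ker]
        have : ((a + LinearMap.id) ∘ₗ ((lam • LinearMap.id - a) ∘ₗ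
            (lam ^ 2 • LinearMap.id - lam • b + b ∘ₗ a))) y = 0 := by
          have e0 : ((a + LinearMap.id) ∘ₗ ((lam • LinearMap.id - a) ∘ₗ
              (lam ^ 2 • LinearMap.id - lam • b + b ∘ₗ a))) =
              (a + 1) * ((lam • (1 : Module.End K (V ⊗[K] (V ⊗[K] V))) - a) *
                ((lam ^ 2) • (1 : Module.End K (V ⊗[K] (V ⊗[K] V))) - lam • b + b * a)) := rfl
          rw [e0, hza]
          rfl
        exact this
      · rw [LinearMap.mem_ker]
        have : ((b + LinearMap.id) ∘ₗ ((lam • LinearMap.id - a) ∘ₗ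
            (lam ^ 2 • LinearMap.id - lam • b + b ∘ₗ a))) y = 0 := by
          have e0 : ((b + LinearMap.id) ∘ₗ ((lam • LinearMap.id - a) ∘ₗ
              (lam ^ 2 • LinearMap.id - lam • b + b ∘ₗ a))) =
              (b + 1) * ((lam • (1 : Module.End K (V ⊗[K] (V ⊗[K] V))) - a) *
                ((lam ^ 2) • (1 : Module.End K (V ⊗[K] (V ⊗[K] V))) - lam • b + b * a)) := rfl
          rw [e0, hzb]
          rfl
        exact this
  exact ⟨by rw [hS1, hS2], by rw [hS1, hS2, hZ]⟩

end
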